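/- arXiv:2602.19292 — 8 statements merged into one kernel-verified Lean document; each statement's English description precedes it below -/
import Mathlib

section
/- Let m be a real random variable with law N(0, σ_m²) where σ_m² > 0, on a probability space (Ω, ℱ, ℙ). For a measurable encoder γ : ℝ → ℝ let u_γ = 𝔼[m | σ(γ(m))] and J(γ) = 𝔼[(a·m − b − u_γ)²]. If a < 1/2, then the constant encoder γ₀ ≡ 0 satisfies J(γ₀) ≤ J(γ) for every measurable γ : ℝ → ℝ, the constant encoder yields u_{γ₀} = 0 almost surely (a non-informative equilibrium), and J(γ₀) = a²·σ_m² + b². -/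
open MeasureTheory ProbabilityTheory NNReal

/-!
With `u = 𝔼[m | G]` for any sub-σ-algebra `G`, the pull-out property gives `𝔼[m u] = 𝔼[u²]`, and
`𝔼[u] = 𝔼[m] = 0`. Expanding the square,
`𝔼[(a m - b - u)²] = 𝔼[(a m - b)²] + (1 - 2a) 𝔼[u²]`,
so for `a ≤ 1/2` no encoder beats the one that reveals nothing. The constant encoder generates the
trivial σ-algebra, whence `u = 𝔼[m] = 0` and its cost is `𝔼[(a m - b)²] = a² σ_m² + b²`.
-/

section MeanSquareError

variable {Ω : Type*} {G m₀ : MeasurableSpace Ω} {μ : Measure Ω} {f : Ω → ℝ}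

lemma integral_mul_condExp_eq_integral_sq [IsFiniteMeasure μ] (hG : G ≤ m₀) (hf : MemLp f 2 μ) :
    ∫ ω, f ω * μ[f | G] ω ∂μ = ∫ ω, μ[f | G] ω ^ 2 ∂μ := by
  have hfu : Integrable (μ[f | G] * f) μ := (hf.condExp one_le_two).integrable_mul hf
  calc ∫ ω, f ω * μ[f | G] ω ∂μ = ∫ ω, μ[μ[f | G] * f | G] ω ∂μ := by
        rw [integral_condExp hG]; simp only [Pi.mul_apply, mul_comm]
    _ = ∫ ω, μ[f | G] ω ^ 2 ∂μ := integral_congr_ae <|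
        (condExp_mul_of_stronglyMeasurable_left stronglyMeasurable_condExp hfu
          (hf.integrable one_le_two)).mono fun ω hω => by simp [hω, sq]

lemma integral_sq_sub_condExp_eq [IsProbabilityMeasure μ] (hG : G ≤ m₀) (hf : MemLp f 2 μ)
    (hf0 : ∫ ω, f ω ∂μ = 0) (a b : ℝ) :
    ∫ ω, (a * f ω - b - μ[f | G] ω) ^ 2 ∂μ
      = ∫ ω, (a * f ω - b) ^ 2 ∂μ + (1 - 2 * a) * ∫ ω, μ[f | G] ω ^ 2 ∂μ := by
  have hu : MemLp μ[f | G] 2 μ := hf.condExp one_le_two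
  have hu0 : ∫ ω, μ[f | G] ω ∂μ = 0 := by rw [integral_condExp hG, hf0]
  have hc : MemLp (fun ω => a * f ω - b) 2 μ := (hf.const_mul a).sub (memLp_const b)
  have hfu : Integrable (fun ω => f ω * μ[f | G] ω) μ := hf.integrable_mul hu
  calc ∫ ω, (a * f ω - b - μ[f | G] ω) ^ 2 ∂μ
      = ∫ ω, ((a * f ω - b) ^ 2 + μ[f | G] ω ^ 2 - 2 * a * (f ω * μ[f | G] ω)
          + 2 * b * μ[f | G] ω) ∂μ := by
        congr 1; ext ω; ring
    _ = ∫ ω, (a * f ω - b) ^ 2 ∂μ + ∫ ω, μ[f | G] ω ^ 2 ∂μ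
          - 2 * a * ∫ ω, f ω * μ[f | G] ω ∂μ + 2 * b * ∫ ω, μ[f | G] ω ∂μ := by
        have hc2 := hc.integrable_sq
        have hu2 := hu.integrable_sq
        have hfu' := hfu.const_mul (2 * a)
        have hu1 := (hu.integrable one_le_two).const_mul (2 * b)
        rw [integral_add (by fun_prop) hu1, integral_sub (by fun_prop) hfu',
          integral_add hc2 hu2, integral_const_mul, integral_const_mul]
    _ = _ := by rw [integral_mul_condExp_eq_integral_sq hG hf, hu0]; ring

lemma le_integral_sq_sub_condExp [IsProbabilityMeasure μ] (hG : G ≤ m₀) (hf : MemLp f 2 μ)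
    (hf0 : ∫ ω, f ω ∂μ = 0) {a : ℝ} (ha : a ≤ 1 / 2) (b : ℝ) :
    ∫ ω, (a * f ω - b) ^ 2 ∂μ ≤ ∫ ω, (a * f ω - b - μ[f | G] ω) ^ 2 ∂μ := by
  rw [integral_sq_sub_condExp_eq hG hf hf0]
  have : 0 ≤ ∫ ω, μ[f | G] ω ^ 2 ∂μ := integral_nonneg fun ω => sq_nonneg _
  nlinarith

lemma integral_mul_sub_const_sq_of_integral_eq_zero [IsProbabilityMeasure μ] (hf : MemLp f 2 μ)
    (hf0 : ∫ ω, f ω ∂μ = 0) (a b : ℝ) :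
    ∫ ω, (a * f ω - b) ^ 2 ∂μ = a ^ 2 * ∫ ω, f ω ^ 2 ∂μ + b ^ 2 := by
  calc ∫ ω, (a * f ω - b) ^ 2 ∂μ = ∫ ω, (a ^ 2 * f ω ^ 2 - 2 * a * b * f ω + b ^ 2) ∂μ := by
        congr 1; ext ω; ring
    _ = a ^ 2 * ∫ ω, f ω ^ 2 ∂μ - 2 * a * b * ∫ ω, f ω ∂μ + b ^ 2 := by
        have hf2 := hf.integrable_sq.const_mul (a ^ 2)
        have hf1 := (hf.integrable one_le_two).const_mul (2 * a * b)
        rw [integral_add (by fun_prop) (integrable_const _), integral_sub hf2 hf1,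
          integral_const_mul, integral_const_mul, integral_const, probReal_univ, one_smul]
    _ = _ := by rw [hf0]; ring

end MeanSquareError

theorem stmt_3_general {Ω : Type*} {F : MeasurableSpace Ω} {μ : Measure Ω} [IsProbabilityMeasure μ]
    (m : Ω → ℝ) (hm : Measurable m) (v : ℝ≥0)
    (hmap : μ.map m = gaussianReal 0 v) (a b : ℝ) (ha : a < 1 / 2) :
    (∀ γ : ℝ → ℝ, Measurable γ →
      ∫ ω, (a * m ω - b -
          (μ[m | MeasurableSpace.comap (fun ω => (0 : ℝ)) inferInstance]) ω) ^ 2 ∂μ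
        ≤ ∫ ω, (a * m ω - b -
            (μ[m | MeasurableSpace.comap (fun ω => γ (m ω)) inferInstance]) ω) ^ 2 ∂μ) ∧
    (μ[m | MeasurableSpace.comap (fun ω => (0 : ℝ)) inferInstance]) =ᵐ[μ] (fun _ => (0 : ℝ)) ∧
    ∫ ω, (a * m ω - b -
        (μ[m | MeasurableSpace.comap (fun ω => (0 : ℝ)) inferInstance]) ω) ^ 2 ∂μ
      = a ^ 2 * (v : ℝ) + b ^ 2 := by
  have hlaw : HasLaw m (gaussianReal 0 v) μ := ⟨hm.aemeasurable, hmap⟩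
  have hm2 : MemLp m 2 μ :=
    (memLp_map_measure_iff aestronglyMeasurable_id hm.aemeasurable).mp
      (hmap ▸ memLp_id_gaussianReal 2)
  have hmean : ∫ ω, m ω ∂μ = 0 := by rw [hlaw.integral_eq, integral_id_gaussianReal]
  have hvar : ∫ ω, m ω ^ 2 ∂μ = v := by
    rw [← variance_of_integral_eq_zero hm.aemeasurable hmean, hlaw.variance_eq,
      variance_id_gaussianReal]
  rw [MeasurableSpace.comap_const, condExp_bot, hmean]
  refine ⟨fun γ hγ => ?_, .rfl, ?_⟩
  · simp only [sub_zero]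
    exact le_integral_sq_sub_condExp (hγ.comp hm).comap_le hm2 hmean ha.le b
  · simp [integral_mul_sub_const_sq_of_integral_eq_zero hm2 hmean, hvar]

/-- Scalar noiseless cheap talk with Gaussian source, case `a < 1/2`: the constant
encoder `γ₀ ≡ 0` is a Stackelberg equilibrium, it is non-informative (`u = 0` a.s.),
and its cost is `a²·σ_m² + b²`. -/
theorem stmt_3 {Ω : Type*} {F : MeasurableSpace Ω} {μ : Measure Ω} [IsProbabilityMeasure μ]
    (m : Ω → ℝ) (hm : Measurable m) (v : ℝ≥0) (hv : 0 < v)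
    (hmap : μ.map m = gaussianReal 0 v) (a b : ℝ) (ha : a < 1 / 2) :
    (∀ γ : ℝ → ℝ, Measurable γ →
      ∫ ω, (a * m ω - b -
          (μ[m | MeasurableSpace.comap (fun ω => (0 : ℝ)) inferInstance]) ω) ^ 2 ∂μ
        ≤ ∫ ω, (a * m ω - b -
            (μ[m | MeasurableSpace.comap (fun ω => γ (m ω)) inferInstance]) ω) ^ 2 ∂μ) ∧
    (μ[m | MeasurableSpace.comap (fun ω => (0 : ℝ)) inferInstance]) =ᵐ[μ] (fun _ => (0 : ℝ)) ∧
    ∫ ω, (a * m ω - b -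
        (μ[m | MeasurableSpace.comap (fun ω => (0 : ℝ)) inferInstance]) ω) ^ 2 ∂μ
      = a ^ 2 * (v : ℝ) + b ^ 2 :=
  stmt_3_general (F := F) m hm v hmap a b ha
end

section
/- Let m be a real random variable with law N(0, σ_m²) where σ_m² > 0, on a probability space (Ω, ℱ, ℙ). For a measurable encoder γ : ℝ → ℝ let u_γ = 𝔼[m | σ(γ(m))] and J(γ) = 𝔼[(a·m − b − u_γ)²]. If a = 1/2, then J(γ) = (1/4)·σ_m² + b² for every measurable γ : ℝ → ℝ; that is, the encoder's cost is independent of the encoding policy and every policy is a Stackelberg equilibrium. -/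
/-!
For `a = 1/2` the error is `a m - b - u = (m - 2u)/2 - b` with `u = 𝔼[m | γ(m)]`. Since `u` is the
orthogonal projection of `m` onto the `σ(γ(m))`-measurable part of `L²`, `2u - m` is the
reflection of `m` in that subspace: it has the second moment `σ_m²` of `m` and the mean `-𝔼[m] = 0`,
whatever `γ` is.
-/

open MeasureTheory ProbabilityTheory NNReal

section CondExp

variable {Ω : Type*} {m m₀ : MeasurableSpace Ω} {μ : Measure Ω} {X : Ω → ℝ}

lemma integral_mul_condExp_eq_integral_condExp_sq [IsFiniteMeasure μ] (hm : m ≤ m₀)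
    (hX : MemLp X 2 μ) : ∫ ω, X ω * (μ[X | m]) ω ∂μ = ∫ ω, (μ[X | m]) ω ^ 2 ∂μ := by
  have hXu : Integrable (X * μ[X | m]) μ :=
    memLp_one_iff_integrable.1 ((hX.condExp one_le_two).mul hX)
  calc ∫ ω, X ω * (μ[X | m]) ω ∂μ = ∫ ω, (μ[X * μ[X | m] | m]) ω ∂μ :=
        (integral_condExp hm).symm
    _ = ∫ ω, (μ[X | m] * μ[X | m]) ω ∂μ := integral_congr_ae <|
        condExp_mul_of_stronglyMeasurable_right stronglyMeasurable_condExp hXu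
          (hX.integrable one_le_two)
    _ = ∫ ω, (μ[X | m]) ω ^ 2 ∂μ := by simp only [Pi.mul_apply, sq]

lemma integral_sub_two_mul_condExp_sq [IsFiniteMeasure μ] (hm : m ≤ m₀) (hX : MemLp X 2 μ) :
    ∫ ω, (X ω - 2 * (μ[X | m]) ω) ^ 2 ∂μ = ∫ ω, X ω ^ 2 ∂μ := by
  have hu : MemLp (μ[X | m]) 2 μ := hX.condExp one_le_two
  have hXu : Integrable (fun ω => X ω * (μ[X | m]) ω) μ :=
    memLp_one_iff_integrable.1 (hu.mul hX)
  calc ∫ ω, (X ω - 2 * (μ[X | m]) ω) ^ 2 ∂μ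
      = ∫ ω, (X ω ^ 2 - 4 * (X ω * (μ[X | m]) ω - (μ[X | m]) ω ^ 2)) ∂μ := by
        congr 1; ext ω; ring
    _ = ∫ ω, X ω ^ 2 ∂μ := by
        have hdiff : Integrable (fun ω => X ω * (μ[X | m]) ω - (μ[X | m]) ω ^ 2) μ :=
          hXu.sub hu.integrable_sq
        rw [integral_sub hX.integrable_sq (hdiff.const_mul 4),
          integral_const_mul, integral_sub hXu hu.integrable_sq,
          integral_mul_condExp_eq_integral_condExp_sq hm hX]
        ring

lemma integral_half_sub_const_sub_condExp_sq [IsProbabilityMeasure μ] (hm : m ≤ m₀)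
    (hX : MemLp X 2 μ) (b : ℝ) :
    ∫ ω, (1 / 2 * X ω - b - (μ[X | m]) ω) ^ 2 ∂μ
      = 1 / 4 * ∫ ω, X ω ^ 2 ∂μ + b * ∫ ω, X ω ∂μ + b ^ 2 := by
  have hY : MemLp (fun ω => X ω - 2 * (μ[X | m]) ω) 2 μ :=
    hX.sub ((hX.condExp one_le_two).const_mul 2)
  calc ∫ ω, (1 / 2 * X ω - b - (μ[X | m]) ω) ^ 2 ∂μ
      = ∫ ω, (1 / 4 * (X ω - 2 * (μ[X | m]) ω) ^ 2 - b * (X ω - 2 * (μ[X | m]) ω)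
          + b ^ 2) ∂μ := by
        congr 1; ext ω; ring
    _ = 1 / 4 * ∫ ω, X ω ^ 2 ∂μ + b * ∫ ω, X ω ∂μ + b ^ 2 := by
        have hY2 : Integrable (fun ω => 1 / 4 * (X ω - 2 * (μ[X | m]) ω) ^ 2) μ :=
          hY.integrable_sq.const_mul _
        have hY1 : Integrable (fun ω => b * (X ω - 2 * (μ[X | m]) ω)) μ :=
          (hY.integrable one_le_two).const_mul _
        have hY21 : Integrable (fun ω => 1 / 4 * (X ω - 2 * (μ[X | m]) ω) ^ 2
            - b * (X ω - 2 * (μ[X | m]) ω)) μ := hY2.sub hY1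
        rw [integral_add hY21 (integrable_const _), integral_sub hY2 hY1,
          integral_const_mul, integral_const_mul, integral_sub_two_mul_condExp_sq hm hX,
          integral_sub (hX.integrable one_le_two) (integrable_condExp.const_mul 2),
          integral_const_mul, integral_condExp hm, integral_const, probReal_univ, smul_eq_mul]
        ring

end CondExp

lemma integral_sq_of_hasLaw_gaussianReal_zero {Ω : Type*} {mΩ : MeasurableSpace Ω}
    {P : Measure Ω} {X : Ω → ℝ} {v : ℝ≥0} (hX : HasLaw X (gaussianReal 0 v) P) :
    ∫ ω, X ω ^ 2 ∂P = v := by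
  have hmean : ∫ ω, X ω ∂P = 0 := hX.integral_eq.trans integral_id_gaussianReal
  rw [← variance_of_integral_eq_zero hX.aemeasurable hmean, hX.variance_eq,
    variance_id_gaussianReal]

theorem stmt_4_general {Ω : Type*} {F : MeasurableSpace Ω} {μ : Measure Ω} [IsProbabilityMeasure μ]
    (m : Ω → ℝ) (hm : Measurable m) (v : ℝ≥0)
    (hmap : μ.map m = gaussianReal 0 v) (a b : ℝ) (ha : a = 1 / 2) :
    ∀ γ : ℝ → ℝ, Measurable γ →
      ∫ ω, (a * m ω - b -
          (μ[m | MeasurableSpace.comap (fun ω => γ (m ω)) inferInstance]) ω) ^ 2 ∂μ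
        = (1 / 4) * (v : ℝ) + b ^ 2 := by
  intro γ hγ
  subst ha
  have hlaw : HasLaw m (gaussianReal 0 v) μ := ⟨hm.aemeasurable, hmap⟩
  have hG : MeasurableSpace.comap (fun ω => γ (m ω)) inferInstance ≤ F :=
    (hγ.comp hm).comap_le
  rw [integral_half_sub_const_sub_condExp_sq hG hlaw.hasGaussianLaw.memLp_two b,
    integral_sq_of_hasLaw_gaussianReal_zero hlaw,
    hlaw.integral_eq.trans integral_id_gaussianReal]
  ring

/-- Scalar noiseless cheap talk with Gaussian source, case `a = 1/2`: the encoder's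
cost equals `(1/4)·σ_m² + b²` for every measurable policy `γ`, so every policy is a
Stackelberg equilibrium. -/
theorem stmt_4 {Ω : Type*} {F : MeasurableSpace Ω} {μ : Measure Ω} [IsProbabilityMeasure μ]
    (m : Ω → ℝ) (hm : Measurable m) (v : ℝ≥0) (hv : 0 < v)
    (hmap : μ.map m = gaussianReal 0 v) (a b : ℝ) (ha : a = 1 / 2) :
    ∀ γ : ℝ → ℝ, Measurable γ →
      ∫ ω, (a * m ω - b -
          (μ[m | MeasurableSpace.comap (fun ω => γ (m ω)) inferInstance]) ω) ^ 2 ∂μ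
        = (1 / 4) * (v : ℝ) + b ^ 2 :=
  stmt_4_general (F := F) m hm v hmap a b ha
end

section
/- Let m be a square-integrable random vector with values in ℝⁿ and mean zero on a probability space (Ω, ℱ, ℙ), let 𝒢 ⊆ ℱ be a sub-σ-algebra, and set u = 𝔼[m | 𝒢], Σ_m = 𝔼[m mᵀ], Σ_u = 𝔼[u uᵀ]. Then for every matrix A ∈ ℝ^{n×n} and vector b ∈ ℝⁿ, 𝔼[‖A m − b − u‖²] = Tr(V Σ_u) + Tr(Aᵀ A Σ_m) + ‖b‖², where V = I − (A + Aᵀ). In particular, the encoder's cheap-talk cost is an affine function of the posterior mean covariance Σ_u with linear kernel V. -/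
/-!
Write `u = 𝔼[m | 𝒢]`. Since `u` is `𝒢`-measurable, the tower property gives
`𝔼[m uᵀ] = 𝔼[u mᵀ] = Σ_u`, so the second-moment matrix of the mean-zero vector `A m − u` is
`A Σ_m Aᵀ − A Σ_u − Σ_u Aᵀ + Σ_u`. The constant `b` only adds `‖b‖²`, and the trace of that
matrix is `Tr((I − (A + Aᵀ)) Σ_u) + Tr(Aᵀ A Σ_m)` by cyclicity.
-/

open MeasureTheory Matrix

section CrossMoment

variable {Ω ι κ ι' : Type*} {mΩ : MeasurableSpace Ω} {μ : Measure Ω}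

variable (μ) in
noncomputable def crossMoment (X : Ω → ι → ℝ) (Y : Ω → κ → ℝ) : Matrix ι κ ℝ :=
  of fun i j => ∫ ω, X ω i * Y ω j ∂μ

theorem crossMoment_transpose (X : Ω → ι → ℝ) (Y : Ω → κ → ℝ) :
    (crossMoment μ X Y)ᵀ = crossMoment μ Y X := by
  ext i j
  simp only [crossMoment, transpose_apply, of_apply, mul_comm]

theorem crossMoment_congr_ae {X X' : Ω → ι → ℝ} {Y Y' : Ω → κ → ℝ} (hX : X =ᵐ[μ] X')
    (hY : Y =ᵐ[μ] Y') : crossMoment μ X Y = crossMoment μ X' Y' := by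
  ext i j
  exact integral_congr_ae (by filter_upwards [hX, hY] with ω hXω hYω; rw [hXω, hYω])

theorem integral_ofLp {β : ι → Type*} [Fintype ι] [∀ i, NormedAddCommGroup (β i)]
    [∀ i, NormedSpace ℝ (β i)] [∀ i, CompleteSpace (β i)] {p : ENNReal} [Fact (1 ≤ p)]
    (f : Ω → PiLp p β) : ∫ ω, (f ω).ofLp ∂μ = (∫ ω, f ω ∂μ).ofLp :=
  (PiLp.continuousLinearEquiv p ℝ β).integral_comp_comm f

variable [Fintype ι] [Fintype κ] {X Y : Ω → ι → ℝ} {Z : Ω → κ → ℝ}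

theorem MeasureTheory.MemLp.mulVec [Fintype ι'] {p : ENNReal} (A : Matrix ι' ι ℝ)
    (hX : MemLp X p μ) : MemLp (fun ω => A *ᵥ X ω) p μ :=
  (mulVecLin A).toContinuousLinearMap.comp_memLp' hX

theorem integral_mulVec [Fintype ι'] (A : Matrix ι' ι ℝ) (hX : Integrable X μ) :
    ∫ ω, A *ᵥ X ω ∂μ = A *ᵥ ∫ ω, X ω ∂μ :=
  (mulVecLin A).toContinuousLinearMap.integral_comp_comm hX

theorem integrable_apply_mul_apply (hX : MemLp X 2 μ) (hZ : MemLp Z 2 μ) (i : ι) (j : κ) :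
    Integrable (fun ω => X ω i * Z ω j) μ :=
  (hX.eval i).integrable_mul (hZ.eval j)

theorem crossMoment_sub_left (hX : MemLp X 2 μ) (hY : MemLp Y 2 μ) (hZ : MemLp Z 2 μ) :
    crossMoment μ (X - Y) Z = crossMoment μ X Z - crossMoment μ Y Z := by
  ext i j
  simp only [crossMoment, of_apply, Matrix.sub_apply, Pi.sub_apply, sub_mul]
  exact integral_sub (integrable_apply_mul_apply hX hZ i j) (integrable_apply_mul_apply hY hZ i j)

theorem crossMoment_sub_right (hX : MemLp X 2 μ) (hY : MemLp Y 2 μ) (hZ : MemLp Z 2 μ) :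
    crossMoment μ Z (X - Y) = crossMoment μ Z X - crossMoment μ Z Y := by
  rw [← transpose_inj, transpose_sub, crossMoment_transpose, crossMoment_transpose,
    crossMoment_transpose, crossMoment_sub_left hX hY hZ]

theorem crossMoment_mulVec_left (A : Matrix ι' ι ℝ) (hX : MemLp X 2 μ) (hZ : MemLp Z 2 μ) :
    crossMoment μ (fun ω => A *ᵥ X ω) Z = A * crossMoment μ X Z := by
  ext i j
  simp only [crossMoment, of_apply, mul_apply, mulVec, dotProduct, Finset.sum_mul, mul_assoc]
  rw [integral_finsetSum _ fun k _ => (integrable_apply_mul_apply hX hZ k j).const_mul _]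
  simp only [integral_const_mul]

theorem crossMoment_mulVec_right (A : Matrix ι' ι ℝ) (hX : MemLp X 2 μ) (hZ : MemLp Z 2 μ) :
    crossMoment μ Z (fun ω => A *ᵥ X ω) = crossMoment μ Z X * Aᵀ := by
  rw [← transpose_inj, transpose_mul, transpose_transpose, crossMoment_transpose,
    crossMoment_transpose, crossMoment_mulVec_left A hX hZ]

theorem integral_sum_sq_sub_const [IsProbabilityMeasure μ] (hY : MemLp Y 2 μ)
    (hY_mean : ∫ ω, Y ω ∂μ = 0) (c : ι → ℝ) :
    ∫ ω, ∑ i, (Y ω i - c i) ^ 2 ∂μ = (crossMoment μ Y Y).trace + ∑ i, c i ^ 2 := by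
  have hsq_int (i : ι) : Integrable (fun ω => (Y ω i - c i) ^ 2) μ :=
    ((hY.eval i).sub (memLp_const (c i))).integrable_sq
  rw [integral_finsetSum _ fun i _ => hsq_int i, trace, ← Finset.sum_add_distrib]
  refine Finset.sum_congr rfl fun i _ => ?_
  have hYi : Integrable (fun ω => Y ω i) μ := (hY.eval i).integrable one_le_two
  have hYi_mean : ∫ ω, Y ω i ∂μ = 0 := by
    rw [← eval_integral (fun i => (hY.eval i).integrable one_le_two), hY_mean, Pi.zero_apply]
  have hYYi : Integrable (fun ω => Y ω i * Y ω i) μ := integrable_apply_mul_apply hY hY i i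
  have hlin : Integrable (fun ω => Y ω i * Y ω i - 2 * c i * Y ω i) μ :=
    hYYi.sub (hYi.const_mul _)
  have hexpand : (fun ω => (Y ω i - c i) ^ 2)
      = fun ω => Y ω i * Y ω i - 2 * c i * Y ω i + c i ^ 2 := by
    ext ω; ring
  rw [hexpand, integral_add hlin (integrable_const _),
    integral_sub hYYi (hYi.const_mul _), integral_const_mul, hYi_mean, integral_const]
  simp [crossMoment]

theorem trace_mul_mul_transpose_sub_sub_add [DecidableEq ι] (A S T : Matrix ι ι ℝ) :
    (A * S * Aᵀ - A * T - T * Aᵀ + T).trace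
      = ((1 - (A + Aᵀ)) * T).trace + (Aᵀ * A * S).trace := by
  simp only [trace_add, trace_sub, sub_mul, add_mul, one_mul]
  rw [trace_mul_cycle, trace_mul_comm T]
  ring

variable {G : MeasurableSpace Ω}

theorem integral_condExp_mul_of_stronglyMeasurable (hG : G ≤ mΩ) [SigmaFinite (μ.trim hG)]
    {f g : Ω → ℝ} (hf : Integrable f μ) (hg : StronglyMeasurable[G] g)
    (hfg : Integrable (f * g) μ) :
    ∫ ω, μ[f|G] ω * g ω ∂μ = ∫ ω, f ω * g ω ∂μ :=
  calc ∫ ω, μ[f|G] ω * g ω ∂μ = ∫ ω, μ[f * g|G] ω ∂μ :=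
        integral_congr_ae (condExp_mul_of_stronglyMeasurable_right hg hfg hf).symm
    _ = ∫ ω, f ω * g ω ∂μ := integral_condExp hG

theorem condExp_apply_ae_eq (hX : Integrable X μ) (i : ι) :
    (fun ω => μ[X|G] ω i) =ᵐ[μ] μ[fun ω => X ω i|G] :=
  (ContinuousLinearMap.proj i).comp_condExp_comm hX

theorem crossMoment_condExp_left [IsFiniteMeasure μ] (hG : G ≤ mΩ) (hX : MemLp X 2 μ)
    (hZ : MemLp Z 2 μ) (hZG : StronglyMeasurable[G] Z) :
    crossMoment μ μ[X|G] Z = crossMoment μ X Z := by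
  ext i j
  calc ∫ ω, μ[X|G] ω i * Z ω j ∂μ = ∫ ω, μ[fun ω => X ω i|G] ω * Z ω j ∂μ :=
        integral_congr_ae
          ((condExp_apply_ae_eq (hX.integrable one_le_two) i).mul (ae_eq_refl _))
    _ = ∫ ω, X ω i * Z ω j ∂μ :=
        integral_condExp_mul_of_stronglyMeasurable hG ((hX.eval i).integrable one_le_two)
          ((continuous_apply j).comp_stronglyMeasurable hZG)
          (integrable_apply_mul_apply hX hZ i j)

theorem crossMoment_condExp_right [IsFiniteMeasure μ] (hG : G ≤ mΩ) (hX : MemLp X 2 μ)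
    (hZ : MemLp Z 2 μ) (hZG : StronglyMeasurable[G] Z) :
    crossMoment μ Z μ[X|G] = crossMoment μ Z X := by
  rw [← transpose_inj, crossMoment_transpose, crossMoment_transpose,
    crossMoment_condExp_left hG hX hZ hZG]

theorem integral_sum_sq_mulVec_sub_sub_condExp [DecidableEq ι] [IsProbabilityMeasure μ]
    (hG : G ≤ mΩ) (hX : MemLp X 2 μ) (hX_mean : ∫ ω, X ω ∂μ = 0) (A : Matrix ι ι ℝ)
    (b : ι → ℝ) :
    ∫ ω, ∑ i, ((A *ᵥ X ω) i - b i - μ[X|G] ω i) ^ 2 ∂μ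
      = ((1 - (A + Aᵀ)) * crossMoment μ μ[X|G] μ[X|G]).trace
        + (Aᵀ * A * crossMoment μ X X).trace + ∑ i, b i ^ 2 := by
  set U := μ[X|G]
  have hAX : MemLp (fun ω => A *ᵥ X ω) 2 μ := hX.mulVec A
  have hU : MemLp U 2 μ := hX.condExp one_le_two
  have hUG : StronglyMeasurable[G] U := stronglyMeasurable_condExp
  have hmean : ∫ ω, ((fun ω => A *ᵥ X ω) - U) ω ∂μ = 0 := by
    rw [integral_sub' (hAX.integrable one_le_two) (hU.integrable one_le_two),
      integral_condExp hG, integral_mulVec A (hX.integrable one_le_two), hX_mean, mulVec_zero,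
      sub_zero]
  have hXU : crossMoment μ X U = crossMoment μ U U :=
    (crossMoment_condExp_left hG hX hU hUG).symm
  have hUX : crossMoment μ U X = crossMoment μ U U :=
    (crossMoment_condExp_right hG hX hU hUG).symm
  calc ∫ ω, ∑ i, ((A *ᵥ X ω) i - b i - U ω i) ^ 2 ∂μ
      = ∫ ω, ∑ i, (((fun ω => A *ᵥ X ω) - U) ω i - b i) ^ 2 ∂μ := by
        simp only [Pi.sub_apply, sub_right_comm]
    _ = (crossMoment μ ((fun ω => A *ᵥ X ω) - U) ((fun ω => A *ᵥ X ω) - U)).trace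
          + ∑ i, b i ^ 2 := integral_sum_sq_sub_const (hAX.sub hU) hmean b
    _ = (A * crossMoment μ X X * Aᵀ - A * crossMoment μ U U - crossMoment μ U U * Aᵀ
          + crossMoment μ U U).trace + ∑ i, b i ^ 2 := by
        rw [crossMoment_sub_left hAX hU (hAX.sub hU), crossMoment_sub_right hAX hU hAX,
          crossMoment_sub_right hAX hU hU, crossMoment_mulVec_left A hX hAX,
          crossMoment_mulVec_left A hX hU, crossMoment_mulVec_right A hX hX,
          crossMoment_mulVec_right A hX hU, hXU, hUX, Matrix.mul_assoc, ← sub_add]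
    _ = _ := by rw [trace_mul_mul_transpose_sub_sub_add]

end CrossMoment

/-- Multidimensional cheap-talk cost decomposition: with `u = 𝔼[m | 𝒢]`,
`𝔼[‖A m − b − u‖²] = Tr(V Σ_u) + Tr(Aᵀ A Σ_m) + ‖b‖²` where `V = I − (A + Aᵀ)`;
the Euclidean norms are written as sums of squares of coordinates. -/
theorem stmt_6 {Ω : Type*} {F : MeasurableSpace Ω} {μ : Measure Ω} [IsProbabilityMeasure μ]
    {n : ℕ} (m : Ω → EuclideanSpace ℝ (Fin n)) (hm : MemLp m 2 μ)
    (hmean : ∫ ω, m ω ∂μ = 0) (G : MeasurableSpace Ω) (hG : G ≤ F)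
    (A : Matrix (Fin n) (Fin n) ℝ) (b : EuclideanSpace ℝ (Fin n)) :
    ∫ ω, ∑ i, (A.mulVec (m ω) i - b i - (μ[m|G]) ω i) ^ 2 ∂μ
      = ((1 - (A + Aᵀ)) *
            Matrix.of fun i j : Fin n => ∫ ω, (μ[m|G]) ω i * (μ[m|G]) ω j ∂μ).trace
        + (Aᵀ * A * Matrix.of fun i j : Fin n => ∫ ω, m ω i * m ω j ∂μ).trace
        + ∑ i, b i ^ 2 := by
  let ofLpCLM := (PiLp.continuousLinearEquiv 2 ℝ fun _ : Fin n => ℝ).toContinuousLinearMap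
  have hX : MemLp (fun ω => (m ω).ofLp) 2 μ := ofLpCLM.comp_memLp' hm
  have hX_mean : ∫ ω, (m ω).ofLp ∂μ = 0 := by rw [integral_ofLp, hmean, WithLp.ofLp_zero]
  have hu : (fun ω => (μ[m|G] ω).ofLp) =ᵐ[μ] μ[fun ω => (m ω).ofLp|G] :=
    ofLpCLM.comp_condExp_comm (hm.integrable one_le_two)
  calc ∫ ω, ∑ i, (A.mulVec (m ω) i - b i - (μ[m|G]) ω i) ^ 2 ∂μ
      = ∫ ω, ∑ i, ((A *ᵥ (m ω).ofLp) i - b i - μ[fun ω => (m ω).ofLp|G] ω i) ^ 2 ∂μ :=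
        integral_congr_ae (hu.mono fun ω hω => by simp only [← hω])
    _ = _ := by
        rw [integral_sum_sq_mulVec_sub_sub_condExp hG hX hX_mean, ← crossMoment_congr_ae hu hu]
        rfl
end

section
/- Let Σ_m be an n×n real positive definite matrix, A ∈ ℝ^{n×n}, V = I − (A + Aᵀ), and B = Σ_m^{1/2} V Σ_m^{1/2} with eigenvalues β₁ ≤ … ≤ βₙ and corresponding orthonormal eigenvectors q₁, …, qₙ; let k be the number of strictly negative eigenvalues and Π* = ∑_{i=1}^k q_i q_iᵀ. Then Σ_u* = Σ_m^{1/2} Π* Σ_m^{1/2} satisfies O ⪯ Σ_u* ⪯ Σ_m and Tr(V Σ_u*) ≤ Tr(V Σ) for every symmetric Σ with O ⪯ Σ ⪯ Σ_m, and the minimum value is Tr(V Σ_u*) = ∑_{i : β_i < 0} β_i. In particular, if all β_i ≥ 0 then Σ_u* = O (non-informative equilibrium), and if all β_i < 0 then Σ_u* = Σ_m (fully revealing equilibrium). -/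
/-!
Conjugating by `S = Σ_m^{1/2}` turns the feasible set `O ⪯ Σ ⪯ Σ_m` into `O ⪯ T ⪯ I`
and the objective `Tr(V Σ)` into `Tr(B T)`. Expanding `B = ∑ βᵢ qᵢ qᵢᵀ` in its orthonormal
eigenbasis, `Tr(B T) = ∑ βᵢ tᵢ` with `tᵢ = qᵢᵀ T qᵢ ∈ [0, 1]`, which is minimised termwise
by `tᵢ = 1` when `βᵢ < 0` and `tᵢ = 0` otherwise, i.e. by the spectral projection `Π*`.
-/

open Matrix

namespace Matrix

variable {n : Type*} [Fintype n]

theorem posSemidef_sum_vecMulVec_self {ι : Type*} (s : Finset ι) (q : ι → n → ℝ) :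
    (∑ i ∈ s, vecMulVec (q i) (q i)).PosSemidef :=
  posSemidef_sum s fun i _ => by simpa using posSemidef_vecMulVec_self_star (q i)

theorem PosSemidef.conj_of_isHermitian {M S : Matrix n n ℝ} (hM : M.PosSemidef)
    (hS : S.IsHermitian) : (S * M * S).PosSemidef := by
  simpa only [hS.eq] using hM.mul_mul_conjTranspose_same S

variable [DecidableEq n]

theorem exists_eq_conj_of_posSemidef_of_le_mul_self {S M : Matrix n n ℝ} (hS : S.IsHermitian)
    (hSunit : IsUnit S) (hM : M.PosSemidef) (hMS : (S * S - M).PosSemidef) :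
    ∃ T : Matrix n n ℝ, T.PosSemidef ∧ (1 - T).PosSemidef ∧ M = S * T * S := by
  have hdet : IsUnit S.det := (isUnit_iff_isUnit_det S).mp hSunit
  have hSinv : S⁻¹.IsHermitian := by
    rw [IsHermitian, conjTranspose_nonsing_inv, hS.eq]
  refine ⟨S⁻¹ * M * S⁻¹, hM.conj_of_isHermitian hSinv, ?_, ?_⟩
  · convert hMS.conj_of_isHermitian hSinv using 1
    rw [mul_sub, sub_mul, ← mul_assoc, nonsing_inv_mul S hdet, one_mul,
      mul_nonsing_inv S hdet]
  · rw [← mul_assoc, mul_nonsing_inv_cancel_left S M hdet, nonsing_inv_mul_cancel_right S M hdet]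

variable {q : n → n → ℝ} (horth : ∀ i j, q i ⬝ᵥ q j = if i = j then 1 else 0)
include horth

theorem sum_vecMulVec_self_eq_one : ∑ i, vecMulVec (q i) (q i) = 1 := by
  have hQ : of q * (of q)ᵀ = 1 := by
    ext i j
    simpa [mul_apply, one_apply, dotProduct] using horth i j
  calc ∑ i, vecMulVec (q i) (q i) = (of q)ᵀ * of q := by
        ext a b
        simp [mul_apply, vecMulVec_apply, sum_apply]
    _ = 1 := mul_eq_one_comm.mp hQ

theorem one_sub_sum_vecMulVec_self (s : Finset n) :
    1 - ∑ i ∈ s, vecMulVec (q i) (q i) = ∑ i ∈ sᶜ, vecMulVec (q i) (q i) := by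
  rw [← sum_vecMulVec_self_eq_one horth, ← Finset.sum_add_sum_compl s, add_sub_cancel_left]

variable {B : Matrix n n ℝ} {β : n → ℝ} (heig : ∀ i, B *ᵥ q i = β i • q i)
include heig

theorem eq_sum_smul_vecMulVec_self : B = ∑ i, β i • vecMulVec (q i) (q i) := by
  conv_lhs => rw [← mul_one B, ← sum_vecMulVec_self_eq_one horth]
  simp only [Finset.mul_sum, mul_vecMulVec, heig, smul_vecMulVec]

theorem trace_mul_sum_vecMulVec_self (s : Finset n) :
    (B * ∑ i ∈ s, vecMulVec (q i) (q i)).trace = ∑ i ∈ s, β i := by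
  simp [Finset.mul_sum, trace_sum, mul_vecMulVec, heig, trace_vecMulVec, horth]

theorem trace_mul_eq_sum_mul_dotProduct_mulVec (T : Matrix n n ℝ) :
    (B * T).trace = ∑ i, β i * (q i ⬝ᵥ T *ᵥ q i) := by
  rw [eq_sum_smul_vecMulVec_self horth heig, Finset.sum_mul, trace_sum]
  simp [vecMulVec_mul, trace_vecMulVec, dotProduct_mulVec, dotProduct_comm]

theorem sum_filter_neg_le_trace_mul {T : Matrix n n ℝ} (hT : T.PosSemidef)
    (hT1 : (1 - T).PosSemidef) :
    ∑ i ∈ Finset.univ.filter (fun i => β i < 0), β i ≤ (B * T).trace := by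
  rw [trace_mul_eq_sum_mul_dotProduct_mulVec horth heig, Finset.sum_filter]
  refine Finset.sum_le_sum fun i _ => ?_
  have ht0 : 0 ≤ q i ⬝ᵥ T *ᵥ q i := by simpa using hT.dotProduct_mulVec_nonneg (q i)
  have ht1 : q i ⬝ᵥ T *ᵥ q i ≤ 1 := by
    have := hT1.dotProduct_mulVec_nonneg (q i)
    simp only [star_trivial, sub_mulVec, one_mulVec, dotProduct_sub, horth, if_true] at this
    linarith
  split_ifs with hβ
  · nlinarith
  · exact mul_nonneg (not_lt.mp hβ) ht0

end Matrix

theorem stmt_9_general {n : ℕ} (Sm A S : Matrix (Fin n) (Fin n) ℝ) (hSm : Sm.PosDef)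
    (hS : S.PosSemidef) (hSS : S * S = Sm)
    (β : Fin n → ℝ) (q : Fin n → Fin n → ℝ)
    (heig : ∀ i, (S * (1 - (A + Aᵀ)) * S).mulVec (q i) = β i • q i)
    (horth : ∀ i j, q i ⬝ᵥ q j = if i = j then 1 else 0) :
    (S * (∑ i ∈ Finset.univ.filter fun i => β i < 0, vecMulVec (q i) (q i)) * S).PosSemidef ∧
    (Sm - S * (∑ i ∈ Finset.univ.filter fun i => β i < 0, vecMulVec (q i) (q i)) * S).PosSemidef ∧
    (∀ Su : Matrix (Fin n) (Fin n) ℝ, Su.PosSemidef → (Sm - Su).PosSemidef →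
      ((1 - (A + Aᵀ)) *
          (S * (∑ i ∈ Finset.univ.filter fun i => β i < 0, vecMulVec (q i) (q i)) * S)).trace
        ≤ ((1 - (A + Aᵀ)) * Su).trace) ∧
    ((1 - (A + Aᵀ)) *
        (S * (∑ i ∈ Finset.univ.filter fun i => β i < 0, vecMulVec (q i) (q i)) * S)).trace
      = ∑ i ∈ Finset.univ.filter (fun i => β i < 0), β i ∧
    ((∀ i, 0 ≤ β i) →
      S * (∑ i ∈ Finset.univ.filter fun i => β i < 0, vecMulVec (q i) (q i)) * S = 0) ∧
    ((∀ i, β i < 0) →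
      S * (∑ i ∈ Finset.univ.filter fun i => β i < 0, vecMulVec (q i) (q i)) * S = Sm) := by
  set V := 1 - (A + Aᵀ)
  have hSunit : IsUnit S := isUnit_of_mul_isUnit_left (hSS ▸ hSm.isUnit)
  have htrace (M : Matrix (Fin n) (Fin n) ℝ) :
      (V * (S * M * S)).trace = (S * V * S * M).trace := by
    rw [← mul_assoc, ← mul_assoc, trace_mul_cycle, ← mul_assoc]
  have hvalue := trace_mul_sum_vecMulVec_self horth heig (Finset.univ.filter fun i => β i < 0)
  rw [← htrace] at hvalue
  refine ⟨(posSemidef_sum_vecMulVec_self _ q).conj_of_isHermitian hS.1, ?_,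
    fun Su hSu hSmSu => ?_, hvalue, fun h => ?_, fun h => ?_⟩
  · have h := (posSemidef_sum_vecMulVec_self (Finset.univ.filter fun i => β i < 0)ᶜ q
      |>.conj_of_isHermitian hS.1)
    rwa [← one_sub_sum_vecMulVec_self horth, mul_sub, sub_mul, mul_one, hSS] at h
  · obtain ⟨T, hT, hT1, rfl⟩ :=
      exists_eq_conj_of_posSemidef_of_le_mul_self hS.1 hSunit hSu (hSS ▸ hSmSu)
    rw [hvalue, htrace]
    exact sum_filter_neg_le_trace_mul horth heig hT hT1
  · rw [Finset.filter_false_of_mem fun i _ => not_lt.mpr (h i), Finset.sum_empty, mul_zero,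
      zero_mul]
  · rw [Finset.filter_true_of_mem fun i _ => h i, sum_vecMulVec_self_eq_one horth, mul_one, hSS]

/-- Equilibrium information structure (Theorem 2 of the paper).
`Sm` is the source covariance `Σ_m ≻ 0`, `S` its positive (semi)definite square
root, `V = I − (A + Aᵀ)` the cost kernel, `B = S V S` the transformed mismatch
matrix with sorted eigenvalues `β` and orthonormal eigenvectors `q`, and
`Π* = ∑_{i : βᵢ < 0} qᵢ qᵢᵀ`.  Then `Σ_u* = S Π* S` satisfies `O ⪯ Σ_u* ⪯ Σ_m`,
minimizes `Tr(V Σ)` over `{O ⪯ Σ ⪯ Σ_m}` with value `∑_{i : βᵢ < 0} βᵢ`, is `O`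
when all `βᵢ ≥ 0` (non-informative) and `Σ_m` when all `βᵢ < 0` (fully revealing). -/
theorem stmt_9 {n : ℕ} (Sm A S : Matrix (Fin n) (Fin n) ℝ) (hSm : Sm.PosDef)
    (hS : S.PosSemidef) (hSS : S * S = Sm)
    (β : Fin n → ℝ) (hβ : Monotone β) (q : Fin n → Fin n → ℝ)
    (heig : ∀ i, (S * (1 - (A + Aᵀ)) * S).mulVec (q i) = β i • q i)
    (horth : ∀ i j, q i ⬝ᵥ q j = if i = j then 1 else 0) :
    (S * (∑ i ∈ Finset.univ.filter fun i => β i < 0, vecMulVec (q i) (q i)) * S).PosSemidef ∧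
    (Sm - S * (∑ i ∈ Finset.univ.filter fun i => β i < 0, vecMulVec (q i) (q i)) * S).PosSemidef ∧
    (∀ Su : Matrix (Fin n) (Fin n) ℝ, Su.PosSemidef → (Sm - Su).PosSemidef →
      ((1 - (A + Aᵀ)) *
          (S * (∑ i ∈ Finset.univ.filter fun i => β i < 0, vecMulVec (q i) (q i)) * S)).trace
        ≤ ((1 - (A + Aᵀ)) * Su).trace) ∧
    ((1 - (A + Aᵀ)) *
        (S * (∑ i ∈ Finset.univ.filter fun i => β i < 0, vecMulVec (q i) (q i)) * S)).trace
      = ∑ i ∈ Finset.univ.filter (fun i => β i < 0), β i ∧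
    ((∀ i, 0 ≤ β i) →
      S * (∑ i ∈ Finset.univ.filter fun i => β i < 0, vecMulVec (q i) (q i)) * S = 0) ∧
    ((∀ i, β i < 0) →
      S * (∑ i ∈ Finset.univ.filter fun i => β i < 0, vecMulVec (q i) (q i)) * S = Sm) :=
  stmt_9_general Sm A S hSm hS hSS β q heig horth
end

section
/- Let Σ_m be an n×n real positive definite matrix with positive definite square root Σ_m^{1/2} and inverse square root Σ_m^{−1/2}, let 1 ≤ k ≤ n, and let Q_k ∈ ℝ^{n×k} have orthonormal columns (Q_kᵀ Q_k = I_k). Define the linear encoder matrix L ∈ ℝ^{n×n} whose first k rows are Q_kᵀ Σ_m^{−1/2} and whose remaining n−k rows are zero, and let E = L Σ_m Lᵀ. Then (i) E is the block-diagonal matrix diag(I_k, O_{n−k}); and (ii) the resulting posterior mean covariance satisfies Σ_m Lᵀ E L Σ_m = Σ_m^{1/2} Q_k Q_kᵀ Σ_m^{1/2}. Hence the deterministic linear encoder x = L m achieves the equilibrium posterior covariance Σ_m^{1/2} Q_k Q_kᵀ Σ_m^{1/2}. -/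
open Matrix

noncomputable def encL {n k : ℕ} (S : Matrix (Fin n) (Fin n) ℝ)
    (Qk : Matrix (Fin n) (Fin k) ℝ) : Matrix (Fin n) (Fin n) ℝ :=
  Matrix.of fun i j => if h : (i : ℕ) < k then (Qkᵀ * S⁻¹) ⟨i, h⟩ j else 0

/-- The embedding matrix with `P i j = 1` iff `(i : ℕ) = (j : ℕ)`. -/
def embP (n k : ℕ) : Matrix (Fin n) (Fin k) ℝ :=
  Matrix.of fun i j => if (i : ℕ) = (j : ℕ) then 1 else 0

lemma encL_eq {n k : ℕ} (S : Matrix (Fin n) (Fin n) ℝ)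
    (Qk : Matrix (Fin n) (Fin k) ℝ) :
    encL S Qk = embP n k * (Qkᵀ * S⁻¹) := by
  ext i j
  simp only [encL, embP, Matrix.mul_apply, Matrix.of_apply]
  by_cases h : (i : ℕ) < k
  · rw [dif_pos h, Finset.sum_eq_single (⟨i, h⟩ : Fin k)]
    · simp
    · intro b _ hb
      have : (i : ℕ) ≠ (b : ℕ) := fun he => hb (by ext; simp [he.symm])
      simp [this]
    · simp
  · rw [dif_neg h]
    refine (Finset.sum_eq_zero fun b _ => ?_).symm
    have : (i : ℕ) ≠ (b : ℕ) := fun he => h (he ▸ b.isLt)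
    simp [this]

lemma embP_tmul {n k : ℕ} (hkn : k ≤ n) : (embP n k)ᵀ * embP n k = 1 := by
  ext a b
  simp only [embP, Matrix.mul_apply, Matrix.transpose_apply, Matrix.of_apply]
  rw [Finset.sum_eq_single (⟨(a : ℕ), lt_of_lt_of_le a.isLt hkn⟩ : Fin n)]
  · by_cases h : a = b
    · simp [h, Matrix.one_apply]
    · have : (a : ℕ) ≠ (b : ℕ) := fun he => h (by ext; exact he)
      simp [Matrix.one_apply, this, h]
  · intro i _ hi
    have : (i : ℕ) ≠ (a : ℕ) := fun he => hi (by ext; simp [he])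
    simp [this]
  · simp

/-- Equilibrium signaling policy (Proposition 3 of the paper): with `S = Σ_m^{1/2}`
positive definite, `S * S = Σ_m`, and `Q_k` having orthonormal columns, the encoder
`L = [Q_kᵀ S⁻¹; O]` satisfies (i) `E = L Σ_m Lᵀ = diag(I_k, O)` and (ii)
`Σ_m Lᵀ E L Σ_m = S Q_k Q_kᵀ S`, i.e. the deterministic linear encoder `x = L m`
achieves the equilibrium posterior covariance `Σ_m^{1/2} Q_k Q_kᵀ Σ_m^{1/2}`. -/
theorem stmt_10 {n k : ℕ} (hk : 1 ≤ k) (hkn : k ≤ n)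
    (Sm S : Matrix (Fin n) (Fin n) ℝ) (hSm : Sm.PosDef) (hS : S.PosDef)
    (hSS : S * S = Sm) (Qk : Matrix (Fin n) (Fin k) ℝ) (hQ : Qkᵀ * Qk = 1) :
    encL S Qk * Sm * (encL S Qk)ᵀ
      = (Matrix.of fun i j : Fin n => if (i : ℕ) < k ∧ i = j then (1 : ℝ) else 0) ∧
    Sm * (encL S Qk)ᵀ * (encL S Qk * Sm * (encL S Qk)ᵀ) * (encL S Qk * Sm)
      = S * (Qk * Qkᵀ) * S := by
  have hdet : IsUnit S.det := isUnit_iff_ne_zero.mpr hS.det_pos.ne'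
  have hSi : S⁻¹ * S = 1 := Matrix.nonsing_inv_mul S hdet
  have hSs : S * S⁻¹ = 1 := Matrix.mul_nonsing_inv S hdet
  have hSt : Sᵀ = S := hS.1
  have hSit : (S⁻¹)ᵀ = S⁻¹ := by rw [Matrix.transpose_nonsing_inv, hSt]
  set P := embP n k with hP
  have hL : encL S Qk = P * (Qkᵀ * S⁻¹) := encL_eq S Qk
  have hPtP : Pᵀ * P = 1 := embP_tmul hkn
  have hE : encL S Qk * Sm * (encL S Qk)ᵀ = P * Pᵀ := by
    rw [hL, ← hSS]
    simp only [Matrix.transpose_mul, hSit, Matrix.transpose_transpose]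
    calc P * (Qkᵀ * S⁻¹) * (S * S) * (S⁻¹ * Qk * Pᵀ)
        = P * (Qkᵀ * ((S⁻¹ * S) * (S * S⁻¹)) * Qk * Pᵀ) := by
          simp only [Matrix.mul_assoc]
      _ = P * Pᵀ := by rw [hSi, hSs, Matrix.one_mul, Matrix.mul_one, hQ]; simp [Matrix.mul_assoc]
  constructor
  · rw [hE]
    ext i j
    simp only [embP, hP, Matrix.mul_apply, Matrix.transpose_apply, Matrix.of_apply]
    by_cases h : (i : ℕ) < k
    · rw [Finset.sum_eq_single (⟨(i : ℕ), h⟩ : Fin k)]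
      · by_cases hij : i = j
        · subst hij; simp [h]
        · have : (j : ℕ) ≠ (i : ℕ) := fun he => hij (by ext; exact he.symm)
          simp [this, h, hij]
      · intro b _ hb
        have : (i : ℕ) ≠ (b : ℕ) := fun he => hb (by ext; simp [he.symm])
        simp [this]
      · simp
    · refine Eq.trans (Finset.sum_eq_zero fun b _ => ?_) (by simp [h])
      have : (i : ℕ) ≠ (b : ℕ) := fun he => h (he ▸ b.isLt)
      simp [this]
  · rw [hE, hL, ← hSS]
    simp only [Matrix.transpose_mul, hSit, Matrix.transpose_transpose]
    calc S * S * (S⁻¹ * Qk * Pᵀ) * (P * Pᵀ) * (P * (Qkᵀ * S⁻¹) * (S * S))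
        = S * (S * S⁻¹) * Qk * ((Pᵀ * P) * (Pᵀ * P)) * Qkᵀ * (S⁻¹ * S) * S := by
          simp only [Matrix.mul_assoc]
      _ = S * (Qk * Qkᵀ) * S := by
          rw [hPtP, hSi, hSs]
          simp [Matrix.mul_assoc]
end

section
/- Let m and w be independent square-integrable real random variables on a probability space (Ω, ℱ, ℙ) with 𝔼[m] = 0. Let γ : ℝ → ℝ be measurable with x = γ(m) square-integrable, set y = x + w, and let u = 𝔼[m | σ(y)]. Then for all real a and b, 𝔼[(a·m − b − u)²] = (2a − 1)·𝔼[(m − u)²] + (a − 1)²·𝔼[m²] + b². In particular, the encoder's total expected cost in the noisy signaling game equals (2a−1)·D + ρ·P + (a−1)²·𝔼[m²] + b², where D = 𝔼[(m − u)²] is the decoder's mean squared error and P = 𝔼[x²] is the transmission power. -/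
/-!
The decoder's estimate `u = 𝔼[m | σ(y)]` is the orthogonal projection of `m` onto
`L²(σ(y))`, so `m - u ⊥ u`, and `𝔼[u] = 𝔼[m] = 0`. Hence in
`a m - b - u = a (m - u) + (a - 1) u - b` the three summands are pairwise orthogonal, giving
`𝔼[(a m - b - u)²] = a² D + (a - 1)² 𝔼[u²] + b²`, and Pythagoras `𝔼[u²] = 𝔼[m²] - D`
turns this into `(2a - 1) D + (a - 1)² 𝔼[m²] + b²`.
-/

open MeasureTheory

section

variable {Ω : Type*} {m mΩ : MeasurableSpace Ω} {μ : Measure Ω}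

lemma integral_mul_add_mul_sq {X Y : Ω → ℝ} (hX : MemLp X 2 μ) (hY : MemLp Y 2 μ) (s t : ℝ) :
    ∫ ω, (s * X ω + t * Y ω) ^ 2 ∂μ = s ^ 2 * ∫ ω, X ω ^ 2 ∂μ
      + 2 * s * t * ∫ ω, X ω * Y ω ∂μ + t ^ 2 * ∫ ω, Y ω ^ 2 ∂μ := by
  have hXX : Integrable (fun ω => s ^ 2 * X ω ^ 2) μ := hX.integrable_sq.const_mul _
  have hXY : Integrable (fun ω => 2 * s * t * (X ω * Y ω)) μ :=
    (hX.integrable_mul hY).const_mul _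
  have hYY : Integrable (fun ω => t ^ 2 * Y ω ^ 2) μ := hY.integrable_sq.const_mul _
  calc ∫ ω, (s * X ω + t * Y ω) ^ 2 ∂μ
      = ∫ ω, s ^ 2 * X ω ^ 2 + 2 * s * t * (X ω * Y ω) + t ^ 2 * Y ω ^ 2 ∂μ := by
        congr 1; funext ω; ring
    _ = _ := by
        rw [integral_add (f := fun ω => s ^ 2 * X ω ^ 2 + 2 * s * t * (X ω * Y ω))
            (hXX.add hXY) hYY, integral_add hXX hXY, integral_const_mul,
          integral_const_mul, integral_const_mul]

lemma integral_mul_condExp_of_stronglyMeasurable (hm : m ≤ mΩ) [SigmaFinite (μ.trim hm)]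
    {f g : Ω → ℝ} (hg : StronglyMeasurable[m] g) (hgf : Integrable (g * f) μ)
    (hf : Integrable f μ) :
    ∫ ω, g ω * μ[f | m] ω ∂μ = ∫ ω, g ω * f ω ∂μ :=
  (integral_congr_ae (condExp_mul_of_stronglyMeasurable_left hg hgf hf)).symm.trans
    (integral_condExp hm)

lemma integral_sub_condExp_mul_condExp (hm : m ≤ mΩ) [IsFiniteMeasure μ] {f : Ω → ℝ}
    (hf : MemLp f 2 μ) : ∫ ω, (f ω - μ[f | m] ω) * μ[f | m] ω ∂μ = 0 := by
  have hu : MemLp (μ[f | m]) 2 μ := hf.condExp one_le_two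
  have huf : Integrable (fun ω => μ[f | m] ω * f ω) μ := hu.integrable_mul hf
  have huu : Integrable (fun ω => μ[f | m] ω * μ[f | m] ω) μ := hu.integrable_mul hu
  have hpull := integral_mul_condExp_of_stronglyMeasurable hm stronglyMeasurable_condExp
    huf (hf.integrable one_le_two)
  simp only [sub_mul, mul_comm (f _)]
  rw [integral_sub huf huu, ← hpull, sub_self]

lemma integral_mul_sub_sub_condExp_sq (hm : m ≤ mΩ) [IsProbabilityMeasure μ] {f : Ω → ℝ}
    (hf : MemLp f 2 μ) (hmean : ∫ ω, f ω ∂μ = 0) (a b : ℝ) :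
    ∫ ω, (a * f ω - b - μ[f | m] ω) ^ 2 ∂μ
      = (2 * a - 1) * ∫ ω, (f ω - μ[f | m] ω) ^ 2 ∂μ + (a - 1) ^ 2 * ∫ ω, f ω ^ 2 ∂μ
        + b ^ 2 := by
  set u := μ[f | m]
  have hu : MemLp u 2 μ := hf.condExp one_le_two
  have he : MemLp (fun ω => f ω - u ω) 2 μ := hf.sub hu
  have horth : ∫ ω, (f ω - u ω) * u ω ∂μ = 0 := integral_sub_condExp_mul_condExp hm hf
  have hu_mean : ∫ ω, u ω ∂μ = 0 := (integral_condExp hm).trans hmean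
  have hpythagoras : ∫ ω, f ω ^ 2 ∂μ = ∫ ω, (f ω - u ω) ^ 2 ∂μ + ∫ ω, u ω ^ 2 ∂μ := by
    have := integral_mul_add_mul_sq he hu 1 1
    simp only [one_mul, sub_add_cancel, horth] at this
    linarith
  have hcentred : ∫ ω, (a * f ω - u ω) ^ 2 ∂μ
      = a ^ 2 * ∫ ω, (f ω - u ω) ^ 2 ∂μ + (a - 1) ^ 2 * ∫ ω, u ω ^ 2 ∂μ := by
    have := integral_mul_add_mul_sq he hu a (a - 1)
    simp only [horth, mul_zero, add_zero] at this
    rw [← this]; congr 1; funext ω; ring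
  have hshift : ∫ ω, (a * f ω - b - u ω) ^ 2 ∂μ = ∫ ω, (a * f ω - u ω) ^ 2 ∂μ + b ^ 2 := by
    have hX : MemLp (fun ω => a * f ω - u ω) 2 μ := (hf.const_mul a).sub hu
    have := integral_mul_add_mul_sq hX (memLp_const (1 : ℝ)) 1 (-b)
    simp only [one_mul, mul_one, one_pow, integral_const, probReal_univ, smul_eq_mul] at this
    rw [integral_sub ((hf.integrable one_le_two).const_mul a) (hu.integrable one_le_two),
      integral_const_mul, hmean, hu_mean] at this
    rw [show (fun ω => (a * f ω - b - u ω) ^ 2) = fun ω => (a * f ω - u ω + -b) ^ 2 by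
      funext ω; ring, this]
    ring
  rw [hshift, hcentred, hpythagoras]
  ring
end

theorem stmt_11_general {Ω : Type*} {F : MeasurableSpace Ω} {μ : Measure Ω} [IsProbabilityMeasure μ]
    (m w : Ω → ℝ) (hm : Measurable m) (hw : Measurable w)
    (hm2 : MemLp m 2 μ)
    (hmean : ∫ ω, m ω ∂μ = 0)
    (γ : ℝ → ℝ) (hγ : Measurable γ)
    (a b ρ : ℝ) :
    (∫ ω, (a * m ω - b -
        (μ[m | MeasurableSpace.comap (fun ω => γ (m ω) + w ω) inferInstance]) ω) ^ 2 ∂μ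
      = (2 * a - 1) *
          ∫ ω, (m ω -
            (μ[m | MeasurableSpace.comap (fun ω => γ (m ω) + w ω) inferInstance]) ω) ^ 2 ∂μ
        + (a - 1) ^ 2 * ∫ ω, (m ω) ^ 2 ∂μ + b ^ 2) ∧
    ((∫ ω, (a * m ω - b -
        (μ[m | MeasurableSpace.comap (fun ω => γ (m ω) + w ω) inferInstance]) ω) ^ 2 ∂μ)
        + ρ * ∫ ω, (γ (m ω)) ^ 2 ∂μ
      = (2 * a - 1) *
          (∫ ω, (m ω -
            (μ[m | MeasurableSpace.comap (fun ω => γ (m ω) + w ω) inferInstance]) ω) ^ 2 ∂μ)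
        + ρ * ∫ ω, (γ (m ω)) ^ 2 ∂μ
        + (a - 1) ^ 2 * ∫ ω, (m ω) ^ 2 ∂μ + b ^ 2) := by
  have hy : Measurable (fun ω => γ (m ω) + w ω) := (hγ.comp hm).add hw
  have hcost := integral_mul_sub_sub_condExp_sq hy.comap_le hm2 hmean a b
  exact ⟨hcost, by rw [hcost]; ring⟩

/-- Noisy-channel cost decomposition: with `y = γ(m) + w` and `u = 𝔼[m | σ(y)]`,
`𝔼[(a·m − b − u)²] = (2a − 1)·𝔼[(m − u)²] + (a − 1)²·𝔼[m²] + b²`, and hence the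
encoder's total cost is `(2a−1)·D + ρ·P + (a−1)²·𝔼[m²] + b²` with `D` the decoder's
MSE and `P = 𝔼[x²]` the transmission power. -/
theorem stmt_11 {Ω : Type*} {F : MeasurableSpace Ω} {μ : Measure Ω} [IsProbabilityMeasure μ]
    (m w : Ω → ℝ) (hm : Measurable m) (hw : Measurable w)
    (hm2 : MemLp m 2 μ) (hw2 : MemLp w 2 μ)
    (hindep : ProbabilityTheory.IndepFun m w μ) (hmean : ∫ ω, m ω ∂μ = 0)
    (γ : ℝ → ℝ) (hγ : Measurable γ) (hx2 : MemLp (fun ω => γ (m ω)) 2 μ)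
    (a b ρ : ℝ) (hρ : 0 ≤ ρ) :
    (∫ ω, (a * m ω - b -
        (μ[m | MeasurableSpace.comap (fun ω => γ (m ω) + w ω) inferInstance]) ω) ^ 2 ∂μ
      = (2 * a - 1) *
          ∫ ω, (m ω -
            (μ[m | MeasurableSpace.comap (fun ω => γ (m ω) + w ω) inferInstance]) ω) ^ 2 ∂μ
        + (a - 1) ^ 2 * ∫ ω, (m ω) ^ 2 ∂μ + b ^ 2) ∧
    ((∫ ω, (a * m ω - b -
        (μ[m | MeasurableSpace.comap (fun ω => γ (m ω) + w ω) inferInstance]) ω) ^ 2 ∂μ)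
        + ρ * ∫ ω, (γ (m ω)) ^ 2 ∂μ
      = (2 * a - 1) *
          (∫ ω, (m ω -
            (μ[m | MeasurableSpace.comap (fun ω => γ (m ω) + w ω) inferInstance]) ω) ^ 2 ∂μ)
        + ρ * ∫ ω, (γ (m ω)) ^ 2 ∂μ
        + (a - 1) ^ 2 * ∫ ω, (m ω) ^ 2 ∂μ + b ^ 2) :=
  stmt_11_general (F := F) m w hm hw hm2 hmean γ hγ a b ρ
end

section
/- Fix reals a > 1/2, ρ > 0, σ_m² > 0, σ_w² > 0, and define f : [0, ∞) → ℝ by f(P) = (2a − 1)·σ_m²·σ_w²/(σ_w² + P) + ρ·P. Then f is strictly convex on [0, ∞), and: (1) if ρ < (2a − 1)·σ_m²/σ_w², then P* = σ_w·√((2a − 1)·σ_m²/ρ) − σ_w² is strictly positive and is the unique minimizer of f on [0, ∞), i.e. f(P*) < f(P) for all P ≥ 0 with P ≠ P*; (2) if ρ ≥ (2a − 1)·σ_m²/σ_w², then 0 is the unique minimizer of f on [0, ∞). -/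
/-!
With `k = (2a−1)σ_m²σ_w²` and `t = σ_w² + P`, the cost is `k/t + ρt − ρσ_w²`. The function
`g(t) = k/t + ρt` is strictly convex on `t > 0`, and if `ρu² = k` then
`g(t) − g(u) = ρ(t − u)²/t`, so `u = √(k/ρ)` is its unique minimizer; `P* = u − σ_w²` is
admissible exactly when `u > σ_w²`. Otherwise `k ≤ ρσ_w²`, and
`g(t) − g(σ_w²) = (t − σ_w²)(ρσ_w²t − k)/(σ_w²t)` is positive for `t > σ_w²`.
-/

open Set

/-- The scalar lower-bound cost `f(P) = (2a−1)σ_m²σ_w²/(σ_w²+P) + ρP`. -/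
noncomputable def f12 (a ρ σm2 σw2 P : ℝ) : ℝ :=
  (2 * a - 1) * σm2 * σw2 / (σw2 + P) + ρ * P

/-- The candidate optimal power `P* = σ_w √((2a−1)σ_m²/ρ) − σ_w²`, `σ_w = √σ_w²`. -/
noncomputable def P12 (a ρ σm2 σw2 : ℝ) : ℝ :=
  Real.sqrt σw2 * Real.sqrt ((2 * a - 1) * σm2 / ρ) - σw2

theorem StrictConvexOn.const_mul {E : Type*} [AddCommMonoid E] [Module ℝ E] {s : Set E}
    {f : E → ℝ} {c : ℝ} (hc : 0 < c) (hf : StrictConvexOn ℝ s f) :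
    StrictConvexOn ℝ s fun x => c * f x := by
  refine ⟨hf.1, fun x hx y hy hxy a b ha hb hab => ?_⟩
  have h := mul_lt_mul_of_pos_left (hf.2 hx hy hxy ha hb hab) hc
  simp only [smul_eq_mul] at h ⊢
  linarith

section ConstDivAddMul

variable {k ρ : ℝ}

theorem strictConvexOn_const_div_add_mul (hk : 0 < k) (hρ : 0 ≤ ρ) :
    StrictConvexOn ℝ (Ioi 0) fun t : ℝ => k / t + ρ * t := by
  have hinv : StrictConvexOn ℝ (Ioi 0) fun t : ℝ => k * t ^ (-1 : ℤ) :=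
    (strictConvexOn_zpow (by decide) (by decide)).const_mul hk
  simpa only [zpow_neg_one, div_eq_mul_inv, smul_eq_mul, id, Pi.add_def] using
    hinv.add_convexOn ((convexOn_id (convex_Ioi 0)).smul hρ)

theorem const_div_add_mul_sub_eq {u t : ℝ} (ht : t ≠ 0) (hk : ρ * u ^ 2 = k) :
    k / t + ρ * t - (k / u + ρ * u) = ρ * (t - u) ^ 2 / t := by
  subst hk
  field_simp
  ring

theorem const_div_add_mul_lt_of_sq_eq {u t : ℝ} (hρ : 0 < ρ) (ht : 0 < t)
    (htu : t ≠ u) (hk : ρ * u ^ 2 = k) : k / u + ρ * u < k / t + ρ * t := by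
  rw [← sub_pos, const_div_add_mul_sub_eq ht.ne' hk]
  have := sq_pos_of_ne_zero (sub_ne_zero.mpr htu)
  positivity

theorem const_div_add_mul_lt_of_le_sq {s t : ℝ} (hρ : 0 < ρ) (hs : 0 < s) (hst : s < t)
    (hk : k ≤ ρ * s ^ 2) : k / s + ρ * s < k / t + ρ * t := by
  have ht : 0 < t := hs.trans hst
  have hdiff : k / t + ρ * t - (k / s + ρ * s) = (t - s) * (ρ * s * t - k) / (s * t) := by
    field_simp
    ring
  have hslope : 0 < ρ * s * t - k := by nlinarith [mul_pos (mul_pos hρ hs) (sub_pos.mpr hst)]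
  rw [← sub_pos, hdiff]
  have := sub_pos.mpr hst
  positivity

end ConstDivAddMul

section Cost

variable {a ρ σm2 σw2 : ℝ}

theorem f12_eq (P : ℝ) :
    f12 a ρ σm2 σw2 P =
      (2 * a - 1) * σm2 * σw2 / (σw2 + P) + ρ * (σw2 + P) - ρ * σw2 := by
  unfold f12
  ring

theorem f12_lt_f12_iff {x y : ℝ} :
    f12 a ρ σm2 σw2 x < f12 a ρ σm2 σw2 y ↔
      (2 * a - 1) * σm2 * σw2 / (σw2 + x) + ρ * (σw2 + x) <
        (2 * a - 1) * σm2 * σw2 / (σw2 + y) + ρ * (σw2 + y) := by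
  rw [f12_eq, f12_eq, sub_lt_sub_iff_right]

theorem strictConvexOn_f12 (hk : 0 < (2 * a - 1) * σm2 * σw2) (hρ : 0 ≤ ρ) (hw : 0 < σw2) :
    StrictConvexOn ℝ (Ici 0) fun P => f12 a ρ σm2 σw2 P := by
  have h := ((strictConvexOn_const_div_add_mul hk hρ).translate_right σw2).add_const (-(ρ * σw2))
  refine (h.subset (fun P (hP : 0 ≤ P) => show 0 < σw2 + P by linarith) (convex_Ici 0)).congr ?_
  intro P _
  simp only [Pi.add_apply, Function.comp_apply, f12_eq]
  ring

theorem P12_add (a ρ σm2 σw2 : ℝ) :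
    P12 a ρ σm2 σw2 + σw2 = Real.sqrt σw2 * Real.sqrt ((2 * a - 1) * σm2 / ρ) := by
  unfold P12
  ring

theorem mul_sq_P12_add (hρ : 0 < ρ) (hc : 0 ≤ (2 * a - 1) * σm2) (hw : 0 ≤ σw2) :
    ρ * (P12 a ρ σm2 σw2 + σw2) ^ 2 = (2 * a - 1) * σm2 * σw2 := by
  rw [P12_add, mul_pow, Real.sq_sqrt hw, Real.sq_sqrt (div_nonneg hc hρ.le)]
  field_simp

theorem P12_pos (hρ : 0 < ρ) (hw : 0 < σw2) (hlt : ρ < (2 * a - 1) * σm2 / σw2) :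
    0 < P12 a ρ σm2 σw2 := by
  have hc : 0 < (2 * a - 1) * σm2 := (mul_pos hρ hw).trans ((lt_div_iff₀ hw).mp hlt)
  have hu : 0 < P12 a ρ σm2 σw2 + σw2 := by
    rw [P12_add]
    exact mul_pos (Real.sqrt_pos.mpr hw) (Real.sqrt_pos.mpr (div_pos hc hρ))
  have hsq : σw2 ^ 2 < (P12 a ρ σm2 σw2 + σw2) ^ 2 := by
    have := (lt_div_iff₀ hw).mp hlt
    nlinarith [mul_sq_P12_add hρ hc.le hw.le]
  have := (pow_lt_pow_iff_left₀ hw.le hu.le two_ne_zero).mp hsq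
  linarith

end Cost

/-- Scalar signaling thresholds (Theorem 3 of the paper, optimization part):
`f` is strictly convex on `[0, ∞)`; if `ρ < (2a−1)σ_m²/σ_w²` then
`P* = σ_w √((2a−1)σ_m²/ρ) − σ_w² > 0` is the unique minimizer of `f` on `[0, ∞)`;
if `ρ ≥ (2a−1)σ_m²/σ_w²` then `0` is the unique minimizer. -/
theorem stmt_12 (a ρ σm2 σw2 : ℝ) (ha : 1 / 2 < a) (hρ : 0 < ρ)
    (hm : 0 < σm2) (hw : 0 < σw2) :
    StrictConvexOn ℝ (Ici 0) (fun P => f12 a ρ σm2 σw2 P) ∧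
    (ρ < (2 * a - 1) * σm2 / σw2 →
      0 < P12 a ρ σm2 σw2 ∧
      ∀ P : ℝ, 0 ≤ P → P ≠ P12 a ρ σm2 σw2 →
        f12 a ρ σm2 σw2 (P12 a ρ σm2 σw2) < f12 a ρ σm2 σw2 P) ∧
    ((2 * a - 1) * σm2 / σw2 ≤ ρ →
      ∀ P : ℝ, 0 ≤ P → P ≠ 0 → f12 a ρ σm2 σw2 0 < f12 a ρ σm2 σw2 P) := by
  have hc : 0 < (2 * a - 1) * σm2 := mul_pos (by linarith) hm
  refine ⟨strictConvexOn_f12 (mul_pos hc hw) hρ.le hw, fun hlt => ?_, fun hle P hP hP0 => ?_⟩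
  · refine ⟨P12_pos hρ hw hlt, fun P hP hne => f12_lt_f12_iff.mpr ?_⟩
    rw [add_comm σw2 (P12 _ _ _ _)]
    exact const_div_add_mul_lt_of_sq_eq hρ (by linarith)
      (fun h => hne (by linarith)) (mul_sq_P12_add hρ hc.le hw.le)
  · have hk : (2 * a - 1) * σm2 * σw2 ≤ ρ * σw2 ^ 2 := by
      have := (div_le_iff₀ hw).mp hle
      nlinarith
    refine f12_lt_f12_iff.mpr ?_
    rw [add_zero]
    exact const_div_add_mul_lt_of_le_sq hρ hw (by linarith [lt_of_le_of_ne hP (Ne.symm hP0)]) hk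
end

section
/- Let m and w be independent square-integrable real random variables on a probability space (Ω, ℱ, ℙ) with 𝔼[m] = 0, and fix reals a ≤ 1/2, b, and ρ > 0. For each measurable encoder γ : ℝ → ℝ with γ(m) square-integrable, set y = γ(m) + w, u_γ = 𝔼[m | σ(y)], and J(γ) = 𝔼[(a·m − b − u_γ)²] + ρ·𝔼[γ(m)²]. Then the zero encoder γ₀ ≡ 0 satisfies J(γ₀) ≤ J(γ) for every such γ, with u_{γ₀} = 0 almost surely; that is, when a ≤ 1/2 the unique equilibrium outcome is non-informative with zero transmission power. -/
/-!
With `u = 𝔼[m | 𝒢]`, the projection identity `𝔼[u m] = 𝔼[u²]` and `𝔼[m] = 0` give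
`𝔼[(a m - b - u)²] = 𝔼[(a m - b)²] + (1 - 2a) 𝔼[u²]`, so for `a ≤ 1/2` no encoder can push the
distortion below `𝔼[(a m - b)²]`, and the power term is nonnegative. The zero encoder attains this
bound: its output `w` is independent of `m`, so `𝔼[m | σ(w)] = 𝔼[m] = 0`.
-/

open MeasureTheory ProbabilityTheory

namespace MeasureTheory

variable {Ω : Type*} {mΩ : MeasurableSpace Ω} {μ : Measure Ω} [IsFiniteMeasure μ]

theorem condExp_comap_ae_eq_integral_of_indepFun {β : Type*} [MeasurableSpace β]
    {X : Ω → ℝ} {Y : Ω → β} (hX : Measurable X) (hY : Measurable Y) (hXY : IndepFun X Y μ) :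
    μ[X | MeasurableSpace.comap Y inferInstance] =ᵐ[μ] fun _ => ∫ ω, X ω ∂μ :=
  condExp_indep_eq hX.comap_le hY.comap_le (Measurable.of_comap_le le_rfl).stronglyMeasurable
    ((IndepFun_iff_Indep X Y μ).1 hXY)

theorem integral_condExp_mul_self {𝒢 : MeasurableSpace Ω} (h𝒢 : 𝒢 ≤ mΩ) {f : Ω → ℝ}
    (hf : MemLp f 2 μ) :
    ∫ ω, (μ[f | 𝒢] * f) ω ∂μ = ∫ ω, (μ[f | 𝒢] ω) ^ 2 ∂μ := by
  have hu : MemLp μ[f | 𝒢] 2 μ := hf.condExp one_le_two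
  have hpull : μ[μ[f | 𝒢] * f | 𝒢] =ᵐ[μ] μ[f | 𝒢] * μ[f | 𝒢] :=
    condExp_mul_of_stronglyMeasurable_left stronglyMeasurable_condExp (hu.integrable_mul hf)
      (hf.integrable one_le_two)
  calc ∫ ω, (μ[f | 𝒢] * f) ω ∂μ = ∫ ω, μ[μ[f | 𝒢] * f | 𝒢] ω ∂μ := (integral_condExp h𝒢).symm
    _ = ∫ ω, (μ[f | 𝒢] * μ[f | 𝒢]) ω ∂μ := integral_congr_ae hpull
    _ = ∫ ω, (μ[f | 𝒢] ω) ^ 2 ∂μ := by simp only [Pi.mul_apply, sq]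

theorem integral_sq_sub_condExp {𝒢 : MeasurableSpace Ω} (h𝒢 : 𝒢 ≤ mΩ) {f : Ω → ℝ}
    (hf : MemLp f 2 μ) (a b : ℝ) :
    ∫ ω, (a * f ω - b - μ[f | 𝒢] ω) ^ 2 ∂μ
      = ∫ ω, (a * f ω - b) ^ 2 ∂μ + (1 - 2 * a) * ∫ ω, (μ[f | 𝒢] ω) ^ 2 ∂μ
        + 2 * b * ∫ ω, f ω ∂μ := by
  set u := μ[f | 𝒢]
  have hu : MemLp u 2 μ := hf.condExp one_le_two
  have hX : MemLp (fun ω => a * f ω - b) 2 μ := (hf.const_mul a).sub (memLp_const b)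
  have hXu : Integrable (fun ω => (a * f ω - b) * u ω) μ := hX.integrable_mul hu
  have hcross : ∫ ω, (a * f ω - b) * u ω ∂μ = a * ∫ ω, u ω ^ 2 ∂μ - b * ∫ ω, f ω ∂μ := by
    have hsplit : (fun ω => (a * f ω - b) * u ω) = fun ω => a * (u * f) ω - b * u ω := by
      funext ω; simp only [Pi.mul_apply]; ring
    rw [hsplit, integral_sub ((hu.integrable_mul hf).const_mul a)
        ((integrable_condExp).const_mul b), integral_const_mul, integral_const_mul,
      integral_condExp_mul_self h𝒢 hf, integral_condExp h𝒢]
  have hexpand : (fun ω => (a * f ω - b - u ω) ^ 2)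
      = fun ω => (a * f ω - b) ^ 2 - 2 * ((a * f ω - b) * u ω) + u ω ^ 2 := by
    funext ω; ring
  have hXsq_sub : Integrable (fun ω => (a * f ω - b) ^ 2 - 2 * ((a * f ω - b) * u ω)) μ :=
    hX.integrable_sq.sub (hXu.const_mul 2)
  rw [hexpand, integral_add hXsq_sub hu.integrable_sq,
    integral_sub hX.integrable_sq (hXu.const_mul 2), integral_const_mul, hcross]
  ring

end MeasureTheory

theorem stmt_13_general {Ω : Type*} {F : MeasurableSpace Ω} {μ : Measure Ω} [IsProbabilityMeasure μ]
    (m w : Ω → ℝ) (hm : Measurable m) (hw : Measurable w)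
    (hm2 : MemLp m 2 μ)
    (hindep : ProbabilityTheory.IndepFun m w μ) (hmean : ∫ ω, m ω ∂μ = 0)
    (a b ρ : ℝ) (ha : a ≤ 1 / 2) (hρ : 0 < ρ) :
    (∀ γ : ℝ → ℝ, Measurable γ → MemLp (fun ω => γ (m ω)) 2 μ →
      (∫ ω, (a * m ω - b -
          (μ[m | MeasurableSpace.comap (fun ω => (0 : ℝ) + w ω) inferInstance]) ω) ^ 2 ∂μ)
        + ρ * ∫ ω, ((0 : ℝ)) ^ 2 ∂μ
      ≤ (∫ ω, (a * m ω - b -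
          (μ[m | MeasurableSpace.comap (fun ω => γ (m ω) + w ω) inferInstance]) ω) ^ 2 ∂μ)
        + ρ * ∫ ω, (γ (m ω)) ^ 2 ∂μ) ∧
    (μ[m | MeasurableSpace.comap (fun ω => (0 : ℝ) + w ω) inferInstance])
      =ᵐ[μ] (fun _ => (0 : ℝ)) := by
  have hsilent : μ[m | MeasurableSpace.comap (fun ω => (0 : ℝ) + w ω) inferInstance]
      =ᵐ[μ] fun _ => (0 : ℝ) := by
    simp only [zero_add]
    simpa [hmean] using condExp_comap_ae_eq_integral_of_indepFun hm hw hindep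
  refine ⟨fun γ hγ _ => ?_, hsilent⟩
  have hy : Measurable fun ω => γ (m ω) + w ω := (hγ.comp hm).add hw
  calc _ = ∫ ω, (a * m ω - b) ^ 2 ∂μ := by
        rw [integral_congr_ae (g := fun ω => (a * m ω - b) ^ 2)
          (hsilent.mono fun ω hω => by simp only [hω, sub_zero])]
        simp
    _ ≤ ∫ ω, (a * m ω - b) ^ 2 ∂μ + (1 - 2 * a) * ∫ ω,
          (μ[m | MeasurableSpace.comap (fun ω => γ (m ω) + w ω) inferInstance] ω) ^ 2 ∂μ :=
        le_add_of_nonneg_right (mul_nonneg (by linarith) (integral_nonneg fun _ => sq_nonneg _))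
    _ = _ := by rw [integral_sq_sub_condExp hy.comap_le hm2, hmean, mul_zero, add_zero]
    _ ≤ _ := le_add_of_nonneg_right (mul_nonneg hρ.le (integral_nonneg fun _ => sq_nonneg _))

/-- Noisy signaling, case `a ≤ 1/2`: the zero encoder `γ₀ ≡ 0` is a Stackelberg
equilibrium (its total cost is at most that of any other square-integrable encoder)
and it is non-informative: `u_{γ₀} = 𝔼[m | σ(0 + w)] = 0` almost surely. -/
theorem stmt_13 {Ω : Type*} {F : MeasurableSpace Ω} {μ : Measure Ω} [IsProbabilityMeasure μ]
    (m w : Ω → ℝ) (hm : Measurable m) (hw : Measurable w)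
    (hm2 : MemLp m 2 μ) (hw2 : MemLp w 2 μ)
    (hindep : ProbabilityTheory.IndepFun m w μ) (hmean : ∫ ω, m ω ∂μ = 0)
    (a b ρ : ℝ) (ha : a ≤ 1 / 2) (hρ : 0 < ρ) :
    (∀ γ : ℝ → ℝ, Measurable γ → MemLp (fun ω => γ (m ω)) 2 μ →
      (∫ ω, (a * m ω - b -
          (μ[m | MeasurableSpace.comap (fun ω => (0 : ℝ) + w ω) inferInstance]) ω) ^ 2 ∂μ)
        + ρ * ∫ ω, ((0 : ℝ)) ^ 2 ∂μ
      ≤ (∫ ω, (a * m ω - b -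
          (μ[m | MeasurableSpace.comap (fun ω => γ (m ω) + w ω) inferInstance]) ω) ^ 2 ∂μ)
        + ρ * ∫ ω, (γ (m ω)) ^ 2 ∂μ) ∧
    (μ[m | MeasurableSpace.comap (fun ω => (0 : ℝ) + w ω) inferInstance])
      =ᵐ[μ] (fun _ => (0 : ℝ)) :=
  stmt_13_general (F := F) m w hm hw hm2 hindep hmean a b ρ ha hρ
end
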